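/- arXiv:1302.2815 — 2 statements merged into one kernel-verified Lean document; each statement's English description precedes it below -/
import Mathlib

section
/- With W as in the Beltrami flow construction (W(ξ) = Σ_{|k|=λ̄} a_k B_k e^{ik·ξ}, with a_{-k} = conj(a_k), B_k = A_k + i(k/|k|)×A_k, A_k·k=0, |A_k|=1/√2, A_{-k}=A_k), the average of W ⊗ W over the torus equals (1/2) Σ_{|k|=λ̄} |a_k|² (Id − (k/|k|) ⊗ (k/|k|)). -/
open MeasureTheory Real
noncomputable section

abbrev X3 := Fin 3 → ℝ

/-- `2π`-periodicity in each coordinate. -/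
def TPeriodic {E : Type*} (f : X3 → E) : Prop :=
  ∀ (x : X3) (k : Fin 3 → ℤ), f (x + fun i => 2 * π * (k i : ℝ)) = f x

/-- A fundamental domain of the torus. -/
def cube : Set X3 := Set.Icc 0 (fun _ => 2 * π)

/-- `i`-th partial derivative. -/
def pd {E : Type*} [NormedAddCommGroup E] [NormedSpace ℝ E]
    (i : Fin 3) (f : X3 → E) (x : X3) : E :=
  fderiv ℝ f x (Pi.single i 1)

def dotR (a b : X3) : ℝ := ∑ i, a i * b i

def crossR (a b : X3) : X3 :=
  ![a 1 * b 2 - a 2 * b 1, a 2 * b 0 - a 0 * b 2, a 0 * b 1 - a 1 * b 0]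

def dotC (a b : Fin 3 → ℂ) : ℂ := ∑ i, a i * b i

/-- sup norm. -/
def C0 {E : Type*} [NormedAddCommGroup E] (f : X3 → E) : ℝ := ⨆ x, ‖f x‖

/-- Hölder seminorm of integer order `m`. -/
def semiNat {E : Type*} [NormedAddCommGroup E] [NormedSpace ℝ E]
    (m : ℕ) (f : X3 → E) : ℝ :=
  ⨆ x, ‖iteratedFDeriv ℝ m f x‖

open Classical in
def Hsemi {E : Type*} [NormedAddCommGroup E] [NormedSpace ℝ E]
    (s : ℝ) (f : X3 → E) : ℝ :=
  if s = (⌊s⌋₊ : ℝ) then semiNat ⌊s⌋₊ f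
  else ⨆ x, ⨆ y,
    ‖iteratedFDeriv ℝ ⌊s⌋₊ f x - iteratedFDeriv ℝ ⌊s⌋₊ f y‖ / ‖x - y‖ ^ (s - (⌊s⌋₊ : ℝ))

open Classical in
def Hnorm {E : Type*} [NormedAddCommGroup E] [NormedSpace ℝ E]
    (r : ℝ) (f : X3 → E) : ℝ :=
  (∑ j ∈ Finset.range (⌊r⌋₊ + 1), semiNat j f) +
    (if r = (⌊r⌋₊ : ℝ) then 0 else Hsemi r f)

/-! Expanding `W ξ i * W ξ j` gives a double sum over modes `k, k'` of
`a_k a_k' B_k B_k' e^{i(k+k')·ξ}`; by orthogonality of the characters only `k' = -k` survives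
the average over the torus. Pairing `k` with `-k`, the reality conditions `a_{-k} = conj a_k` and
`B_{-k} = conj B_k` turn each pair into `|a_k|² · 2 (A_k ⊗ A_k + c_k ⊗ c_k)` with `c_k = k̂ × A_k`,
and `√2 A_k, √2 c_k, k̂` is an orthonormal frame, so `A_k ⊗ A_k + c_k ⊗ c_k = ½ (Id − k̂ ⊗ k̂)`. -/

lemma Finset.sum_comp_neg_of_neg_mem {α M : Type*} [InvolutiveNeg α] [AddCommMonoid M]
    (s : Finset α) (hs : ∀ x ∈ s, -x ∈ s) (f : α → M) :
    ∑ x ∈ s, f (-x) = ∑ x ∈ s, f x :=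
  Finset.sum_nbij' Neg.neg Neg.neg hs hs (by simp) (by simp) (by simp)

lemma Complex.mul_conj_add_conj_mul_ofReal (x u y v : ℝ) :
    (x + Complex.I * u) * (starRingEnd ℂ) (y + Complex.I * v)
      + (starRingEnd ℂ) (x + Complex.I * u) * (y + Complex.I * v)
      = 2 * ((x * y + u * v : ℝ) : ℂ) := by
  simp only [map_add, map_mul, Complex.conj_ofReal, Complex.conj_I]
  push_cast
  linear_combination (-2 * u * v : ℂ) * Complex.I_sq

lemma integral_Icc_exp_int_mul_I (n : ℤ) :
    ∫ x in Set.Icc (0 : ℝ) (2 * π), Complex.exp (Complex.I * n * x)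
      = if n = 0 then (2 * π : ℂ) else 0 := by
  rw [integral_Icc_eq_integral_Ioc, ← intervalIntegral.integral_of_le two_pi_pos.le]
  split_ifs with hn
  · simp [hn]
  · have hc : Complex.I * n ≠ 0 := by simp [hn]
    have hper : Complex.exp (Complex.I * n * (2 * π)) = 1 := by
      rw [← Complex.exp_int_mul_two_pi_mul_I n]; ring_nf
    simp [integral_exp_mul_complex hc, hper]

def torusChar {ι : Type*} [Fintype ι] (k : ι → ℤ) (ξ : ι → ℝ) : ℂ :=
  Complex.exp (Complex.I * ∑ j, (k j : ℂ) * (ξ j : ℂ))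

section torusChar
variable {ι : Type*} [Fintype ι]

lemma torusChar_add (k k' : ι → ℤ) (ξ : ι → ℝ) :
    torusChar (k + k') ξ = torusChar k ξ * torusChar k' ξ := by
  simp only [torusChar, ← Complex.exp_add, ← mul_add, ← Finset.sum_add_distrib]
  congr 2
  refine Finset.sum_congr rfl fun j _ => ?_
  rw [Pi.add_apply, Int.cast_add]
  ring

lemma torusChar_eq_prod (k : ι → ℤ) (ξ : ι → ℝ) :
    torusChar k ξ = ∏ j, Complex.exp (Complex.I * k j * ξ j) := by
  simp only [torusChar, Finset.mul_sum, ← Complex.exp_sum, mul_assoc]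

@[fun_prop]
lemma continuous_torusChar (k : ι → ℤ) : Continuous (torusChar k) := by
  unfold torusChar; fun_prop

lemma integral_Icc_torusChar (k : ι → ℤ) :
    ∫ ξ in Set.Icc 0 (fun _ => 2 * π), torusChar k ξ
      = if k = 0 then (2 * π : ℂ) ^ Fintype.card ι else 0 := by
  simp_rw [torusChar_eq_prod]
  rw [← Set.pi_univ_Icc, volume_pi, Measure.restrict_pi_pi,
    integral_fintype_prod_eq_prod (fun j (x : ℝ) => Complex.exp (Complex.I * k j * x))]
  simp_rw [Pi.zero_apply, integral_Icc_exp_int_mul_I]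
  split_ifs with hk
  · simp [hk]
  · obtain ⟨j, hj⟩ := Function.ne_iff.mp hk
    exact Finset.prod_eq_zero (Finset.mem_univ j) (if_neg (by simpa using hj))

lemma integral_Icc_sum_mul_sum_torusChar (Λ : Finset (ι → ℤ)) (hΛ : ∀ k ∈ Λ, -k ∈ Λ)
    (c d : (ι → ℤ) → ℂ) :
    ∫ ξ in Set.Icc 0 (fun _ => 2 * π),
        (∑ k ∈ Λ, c k * torusChar k ξ) * (∑ k ∈ Λ, d k * torusChar k ξ)
      = (2 * π : ℂ) ^ Fintype.card ι * ∑ k ∈ Λ, c k * d (-k) := by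
  have hint : ∀ (k : ι → ℤ) (b : ℂ),
      IntegrableOn (fun ξ => b * torusChar k ξ) (Set.Icc 0 fun _ => 2 * π) :=
    fun k b => (by fun_prop : Continuous fun ξ => b * torusChar k ξ).integrableOn_Icc
  simp_rw [Finset.sum_mul_sum, mul_mul_mul_comm _ (torusChar _ _), ← torusChar_add]
  rw [integral_finsetSum _ fun k _ => integrable_finsetSum _ fun k' _ => hint _ _,
    Finset.mul_sum]
  refine Finset.sum_congr rfl fun k hk => ?_
  simp_rw [integral_finsetSum _ fun k' _ => hint _ _, integral_const_mul,
    integral_Icc_torusChar, add_eq_zero_iff_eq_neg', mul_ite, mul_zero,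
    Finset.sum_ite_eq' Λ, if_pos (hΛ k hk), mul_comm]

end torusChar

lemma dotR_mul_add_crossR_mul (K A : X3) (i j : Fin 3) :
    dotR K K * (A i * A j) + crossR K A i * crossR K A j =
      dotR A A * (dotR K K * (if i = j then 1 else 0) - K i * K j)
        + dotR A K * (A i * K j + K i * A j) - dotR A K ^ 2 * (if i = j then 1 else 0) := by
  fin_cases i <;> fin_cases j <;> simp [dotR, crossR, Fin.sum_univ_three] <;> ring

lemma crossR_neg_left (K A : X3) : crossR (-K) A = -crossR K A := by
  ext i; fin_cases i <;> simp [crossR] <;> ring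

lemma outer_add_outer_crossR_of_orthonormal {A K : X3} (hAK : dotR A K = 0)
    (hA : dotR A A = 1 / 2) (hK : dotR K K = 1) (i j : Fin 3) :
    A i * A j + crossR K A i * crossR K A j = 1 / 2 * ((if i = j then 1 else 0) - K i * K j) := by
  have h := dotR_mul_add_crossR_mul K A i j
  rw [hAK, hA, hK] at h
  linear_combination h

lemma beltrami_mul_conj_add_conj_mul {lam : ℝ} (hlam : lam ≠ 0) {k : Fin 3 → ℤ}
    (hk : ∑ m, (k m : ℝ) ^ 2 = lam ^ 2) {A : X3} (hAk : dotR A (fun m => (k m : ℝ)) = 0)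
    (hA : dotR A A = 1 / 2) {B : Fin 3 → ℂ}
    (hB : ∀ m, B m = (A m : ℂ) + Complex.I * (crossR (fun j => (k j : ℝ) / lam) A m : ℂ))
    (i j : Fin 3) :
    B i * (starRingEnd ℂ) (B j) + (starRingEnd ℂ) (B i) * B j
      = (if i = j then 1 else 0) - (k i : ℂ) * k j / (lam : ℂ) ^ 2 := by
  have hAK : dotR A (fun m => (k m : ℝ) / lam) = 0 := by
    simp only [dotR] at hAk ⊢
    simp [mul_div_assoc', ← Finset.sum_div, hAk]
  have hK : dotR (fun m => (k m : ℝ) / lam) (fun m => (k m : ℝ) / lam) = 1 := by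
    simp only [dotR, ← sq, div_pow, ← Finset.sum_div, hk]
    exact div_self (pow_ne_zero 2 hlam)
  rw [hB, hB, Complex.mul_conj_add_conj_mul_ofReal, outer_add_outer_crossR_of_orthonormal hAK hA hK]
  split_ifs <;> push_cast <;> field_simp

lemma beltrami_vector_neg {lam : ℝ} {A : (Fin 3 → ℤ) → X3}
    {B : (Fin 3 → ℤ) → Fin 3 → ℂ}
    (hB : ∀ k i, B k i = ((A k i : ℝ) : ℂ) +
      Complex.I * ((crossR (fun j => (k j : ℝ) / lam) (A k)) i : ℂ))
    {k : Fin 3 → ℤ} (hAk : A (-k) = A k) (m : Fin 3) :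
    B (-k) m = (starRingEnd ℂ) (B k m) := by
  have hneg : (fun j => ((-k) j : ℝ) / lam) = -fun j => (k j : ℝ) / lam := by
    ext j; simp [neg_div]
  rw [hB, hB, hAk, hneg, crossR_neg_left]
  simp only [Pi.neg_apply, map_add, map_mul, Complex.conj_ofReal, Complex.conj_I]
  push_cast
  ring

/-- the average over the torus of `W ⊗ W` equals
`(1/2) Σ_{|k|=λ̄} |a_k|² (Id − (k/|k|) ⊗ (k/|k|))`. -/
theorem beltrami_average (lam : ℝ) (hlam : 1 ≤ lam)
    (Λ : Finset (Fin 3 → ℤ))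
    (hΛlen : ∀ k ∈ Λ, (∑ i, ((k i : ℝ)) ^ 2) = lam ^ 2)
    (hΛsym : ∀ k ∈ Λ, -k ∈ Λ)
    (A : (Fin 3 → ℤ) → X3)
    (hAk : ∀ k ∈ Λ, dotR (A k) (fun i => (k i : ℝ)) = 0)
    (hAn : ∀ k ∈ Λ, dotR (A k) (A k) = 1 / 2)
    (hAsym : ∀ k ∈ Λ, A (-k) = A k)
    (a : (Fin 3 → ℤ) → ℂ)
    (ha : ∀ k ∈ Λ, (starRingEnd ℂ) (a k) = a (-k))
    (B : (Fin 3 → ℤ) → Fin 3 → ℂ)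
    (hB : ∀ k i, B k i = ((A k i : ℝ) : ℂ) +
      Complex.I * ((crossR (fun j => (k j : ℝ) / lam) (A k)) i : ℂ))
    (W : X3 → Fin 3 → ℂ)
    (hW : ∀ ξ i, W ξ i = ∑ k ∈ Λ,
      a k * B k i * Complex.exp (Complex.I * (∑ j, (k j : ℂ) * (ξ j : ℂ)))) :
    ∀ i j, ((2 * π) ^ 3 : ℂ)⁻¹ * (∫ ξ in cube, W ξ i * W ξ j) =
      (1 / 2 : ℂ) * ∑ k ∈ Λ, ((‖a k‖) ^ 2 : ℂ) *
        ((if i = j then (1 : ℂ) else 0) - ((k i : ℂ) * (k j : ℂ)) / (lam : ℂ) ^ 2) := by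
  intro i j
  have hlam0 : lam ≠ 0 := by linarith
  have hpair : ∀ k ∈ Λ, a k * B k i * (a (-k) * B (-k) j) + a (-k) * B (-k) i * (a k * B k j)
      = ((‖a k‖) ^ 2 : ℂ) *
        ((if i = j then (1 : ℂ) else 0) - ((k i : ℂ) * (k j : ℂ)) / (lam : ℂ) ^ 2) := by
    intro k hk
    rw [beltrami_vector_neg hB (hAsym k hk), beltrami_vector_neg hB (hAsym k hk), ← ha k hk,
      ← beltrami_mul_conj_add_conj_mul hlam0 (hΛlen k hk) (hAk k hk) (hAn k hk) (hB k),
      ← Complex.mul_conj' (a k)]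
    ring
  have hW' : ∀ ξ, W ξ i * W ξ j
      = (∑ k ∈ Λ, a k * B k i * torusChar k ξ) *
          (∑ k ∈ Λ, a k * B k j * torusChar k ξ) :=
    fun ξ => by rw [hW, hW]; rfl
  calc ((2 * π) ^ 3 : ℂ)⁻¹ * (∫ ξ in cube, W ξ i * W ξ j)
      = ∑ k ∈ Λ, a k * B k i * (a (-k) * B (-k) j) := by
        simp only [hW', cube]
        rw [integral_Icc_sum_mul_sum_torusChar Λ hΛsym, Fintype.card_fin,
          inv_mul_cancel_left₀ (by simp [pi_ne_zero])]
    _ = 1 / 2 * ∑ k ∈ Λ,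
          (a k * B k i * (a (-k) * B (-k) j) + a (-k) * B (-k) i * (a k * B k j)) := by
        rw [Finset.sum_add_distrib, ← Finset.sum_comp_neg_of_neg_mem Λ hΛsym
          fun k => a (-k) * B (-k) i * (a k * B k j)]
        simp only [neg_neg]
        ring
    _ = _ := by rw [Finset.sum_congr rfl hpair]

end
end

section
/- For smooth v: 𝕋³ → ℝ³, define u as the zero-average solution of Δu = v − ⨍v and set ℛv := (1/4)(∇𝒫u + (∇𝒫u)ᵀ) + (3/4)(∇u + (∇u)ᵀ) − (1/2)(div u)Id, where 𝒫 is the Leray projection. Then for every x, ℛv(x) is a symmetric trace-free 3×3 matrix, and div(ℛv) = v − ⨍_{𝕋³} v. -/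
open MeasureTheory Real
noncomputable section

lemma contDiff_pd (i : Fin 3) {f : X3 → ℝ} (hf : ContDiff ℝ (⊤ : ℕ∞) f) :
    ContDiff ℝ (⊤ : ℕ∞) (pd i f) :=
  (hf.fderiv_right (by simp)).clm_apply contDiff_const

lemma pd_sub {f g : X3 → ℝ} {x : X3} (i : Fin 3)
    (hf : DifferentiableAt ℝ f x) (hg : DifferentiableAt ℝ g x) :
    pd i (fun y => f y - g y) x = pd i f x - pd i g x := by
  unfold pd
  rw [fderiv_fun_sub hf hg]; rfl

lemma pd_sum {f : Fin 3 → X3 → ℝ} {x : X3} (i : Fin 3)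
    (hf : ∀ j, DifferentiableAt ℝ (f j) x) :
    pd i (fun y => ∑ j, f j y) x = ∑ j, pd i (f j) x := by
  unfold pd
  rw [fderiv_fun_sum (fun j _ => hf j)]
  simp [ContinuousLinearMap.sum_apply]

lemma pd_zero (i : Fin 3) (x : X3) : pd i (fun _ => (0:ℝ)) x = 0 := by
  simp [pd]

lemma pd_comm {f : X3 → ℝ} (hf : ContDiff ℝ (⊤ : ℕ∞) f) (i j : Fin 3) (x : X3) :
    pd i (pd j f) x = pd j (pd i f) x := by
  have hsymm : IsSymmSndFDerivAt ℝ f x := hf.contDiffAt.isSymmSndFDerivAt (by rw [minSmoothness_of_isRCLikeNormedField]; exact WithTop.coe_le_coe.mpr le_top)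
  have hc : DifferentiableAt ℝ (fderiv ℝ f) x :=
    ((hf.fderiv_right (m := 1) (WithTop.coe_le_coe.mpr le_top)).differentiable (by simp)) x
  have key : ∀ w : X3, pd i (fun y => fderiv ℝ f y w) x
      = fderiv ℝ (fderiv ℝ f) x (Pi.single i 1) w := by
    intro w
    unfold pd
    rw [fderiv_clm_apply hc (differentiableAt_const w)]
    simp
  show pd i (fun y => fderiv ℝ f y (Pi.single j 1)) x
      = pd j (fun y => fderiv ℝ f y (Pi.single i 1)) x
  rw [key (Pi.single j 1)]
  have key' : pd j (fun y => fderiv ℝ f y (Pi.single i 1)) x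
      = fderiv ℝ (fderiv ℝ f) x (Pi.single j 1) (Pi.single i 1) := by
    unfold pd
    rw [fderiv_clm_apply hc (differentiableAt_const _)]
    simp
  rw [key']
  exact hsymm.eq _ _

lemma pd_comb {f₁ f₂ f₃ f₄ f₅ : X3 → ℝ} {x : X3} (j : Fin 3) (a b c : ℝ)
    (h1 : DifferentiableAt ℝ f₁ x) (h2 : DifferentiableAt ℝ f₂ x)
    (h3 : DifferentiableAt ℝ f₃ x) (h4 : DifferentiableAt ℝ f₄ x)
    (h5 : DifferentiableAt ℝ f₅ x) :
    pd j (fun y => a * (f₁ y + f₂ y) + b * (f₃ y + f₄ y) - c * f₅ y) x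
      = a * (pd j f₁ x + pd j f₂ x) + b * (pd j f₃ x + pd j f₄ x) - c * pd j f₅ x := by
  have H : HasFDerivAt (fun y => a * (f₁ y + f₂ y) + b * (f₃ y + f₄ y) - c * f₅ y)
      ((a • (fderiv ℝ f₁ x + fderiv ℝ f₂ x) + b • (fderiv ℝ f₃ x + fderiv ℝ f₄ x))
        - c • fderiv ℝ f₅ x) x :=
    (((h1.hasFDerivAt.add h2.hasFDerivAt).const_mul a).add
      ((h3.hasFDerivAt.add h4.hasFDerivAt).const_mul b)).sub
      (h5.hasFDerivAt.const_mul c)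
  unfold pd
  rw [H.fderiv]
  simp [smul_eq_mul, mul_add]

/-- the inverse-divergence operator `ℛ`: with `u` the zero-average
solution of `Δu = v − ⨍v` and `𝒫u` its Leray projection, the field
`ℛv = (1/4)(∇𝒫u + (∇𝒫u)ᵀ) + (3/4)(∇u + (∇u)ᵀ) − (1/2)(div u) Id`
is pointwise a symmetric trace-free matrix and `div (ℛv) = v − ⨍v`. -/
theorem inverse_divergence_properties (v u Pu : X3 → X3) (φ : X3 → ℝ)
    (hv : ContDiff ℝ (⊤ : ℕ∞) v) (hvp : TPeriodic v)
    (hu : ContDiff ℝ (⊤ : ℕ∞) u) (hup : TPeriodic u)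
    (hPu : ContDiff ℝ (⊤ : ℕ∞) Pu) (hPup : TPeriodic Pu)
    (hφ : ContDiff ℝ (⊤ : ℕ∞) φ)
    (huavg : ∀ i, (∫ x in cube, u x i) = 0)
    (hlap : ∀ x i, (∑ j, pd j (fun y => pd j (fun z => u z i) y) x) =
      v x i - ((2 * π) ^ 3)⁻¹ * ∫ y in cube, v y i)
    (hPdiv : ∀ x, ∑ i, pd i (fun y => Pu y i) x = 0)
    (hgrad : ∀ x i, u x i - Pu x i = pd i φ x)
    (R : X3 → Fin 3 → Fin 3 → ℝ)
    (hR : ∀ x i j, R x i j =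
      (1 / 4) * (pd j (fun y => Pu y i) x + pd i (fun y => Pu y j) x) +
      (3 / 4) * (pd j (fun y => u y i) x + pd i (fun y => u y j) x) -
      (1 / 2) * (if i = j then (∑ l, pd l (fun y => u y l) x) else 0)) :
    (∀ x i j, R x i j = R x j i) ∧
    (∀ x, ∑ i, R x i i = 0) ∧
    (∀ x i, ∑ j, pd j (fun y => R y i j) x =
      v x i - ((2 * π) ^ 3)⁻¹ * ∫ y in cube, v y i) := by
  have hU : ∀ j, ContDiff ℝ (⊤ : ℕ∞) fun y => u y j := fun j => contDiff_pi.mp hu j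
  have hP : ∀ j, ContDiff ℝ (⊤ : ℕ∞) fun y => Pu y j := fun j => contDiff_pi.mp hPu j
  set Du : X3 → ℝ := fun y => ∑ l, pd l (fun z => u z l) y with hDu
  have hDus : ContDiff ℝ (⊤ : ℕ∞) Du := ContDiff.sum fun l _ => contDiff_pd l (hU l)
  refine ⟨?_, ?_, ?_⟩
  · intro x i j
    rw [hR, hR]
    rcases eq_or_ne i j with h | h
    · subst h; ring
    · rw [if_neg h, if_neg (Ne.symm h)]; ring
  · intro x
    have h1 := hPdiv x
    rw [Fin.sum_univ_three] at h1
    rw [Fin.sum_univ_three, hR, hR, hR]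
    simp only [if_pos rfl, if_true]
    rw [Fin.sum_univ_three]
    linarith
  · intro x i
    -- the function Pu_i equals u_i - ∂_i φ
    have hPfun : ∀ j, (fun y => Pu y j) = fun y => u y j - pd j φ y := by
      intro j; funext y; have := hgrad y j; linarith
    -- Laplacian of φ equals div u
    have hlapφ : (fun y => ∑ j, pd j (pd j φ) y) = Du := by
      funext y
      have h0 := hPdiv y
      have : ∀ j, pd j (fun z => Pu z j) y = pd j (fun z => u z j) y - pd j (pd j φ) y := by
        intro j
        rw [hPfun j]
        exact pd_sub j ((hU j).differentiable (by simp) y)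
          (((contDiff_pd j hφ)).differentiable (by simp) y)
      rw [Finset.sum_congr rfl (fun j _ => this j), Finset.sum_sub_distrib] at h0
      simp only [hDu]
      linarith [h0]
    -- per-term derivative formula
    have hterm : ∀ j, pd j (fun y => R y i j) x =
        (1/4) * (pd j (pd j (fun z => Pu z i)) x + pd j (pd i (fun z => Pu z j)) x) +
        (3/4) * (pd j (pd j (fun z => u z i)) x + pd j (pd i (fun z => u z j)) x) -
        (1/2) * (if i = j then pd j Du x else 0) := by
      intro j
      have hfun : (fun y => R y i j) = fun y =>
          (1/4) * (pd j (fun z => Pu z i) y + pd i (fun z => Pu z j) y) +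
          (3/4) * (pd j (fun z => u z i) y + pd i (fun z => u z j) y) -
          (1/2) * (if i = j then Du y else 0) := by
        funext y; exact hR y i j
      rw [hfun]
      have h5d : DifferentiableAt ℝ (fun y => if i = j then Du y else 0) x := by
        by_cases hij : i = j
        · simp only [if_pos hij]; exact hDus.differentiable (by simp) x
        · simp only [if_neg hij]; exact differentiableAt_const 0
      rw [pd_comb j (1/4) (3/4) (1/2)
        ((contDiff_pd j (hP i)).differentiable (by simp) x)
        ((contDiff_pd i (hP j)).differentiable (by simp) x)
        ((contDiff_pd j (hU i)).differentiable (by simp) x)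
        ((contDiff_pd i (hU j)).differentiable (by simp) x)
        h5d]
      congr 1
      by_cases hij : i = j
      · simp only [if_pos hij]
      · simp only [if_neg hij, pd_zero, mul_zero]
    -- sum of the per-term formula
    have hsum : ∑ j, pd j (fun y => R y i j) x =
        (1/4) * (∑ j, pd j (pd j (fun z => Pu z i)) x) +
        (1/4) * (∑ j, pd j (pd i (fun z => Pu z j)) x) +
        (3/4) * (∑ j, pd j (pd j (fun z => u z i)) x) +
        (3/4) * (∑ j, pd j (pd i (fun z => u z j)) x) -
        (1/2) * (∑ j, if i = j then pd j Du x else 0) := by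
      rw [Finset.sum_congr rfl (fun j _ => hterm j)]
      simp only [Finset.sum_sub_distrib, Finset.sum_add_distrib, ← Finset.mul_sum]
      ring
    -- fact 1 : sum of mixed Pu derivatives vanishes
    have hF1 : (∑ j, pd j (pd i (fun z => Pu z j)) x) = 0 := by
      have hswap : ∀ j, pd j (pd i (fun z => Pu z j)) x = pd i (pd j (fun z => Pu z j)) x :=
        fun j => pd_comm (hP j) j i x
      rw [Finset.sum_congr rfl (fun j _ => hswap j)]
      rw [← pd_sum i (fun j => (contDiff_pd j (hP j)).differentiable (by simp) x)]
      have : (fun y => ∑ j, pd j (fun z => Pu z j) y) = fun _ => (0:ℝ) := by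
        funext y; exact hPdiv y
      rw [this, pd_zero]
    -- fact 2 : sum of mixed u derivatives equals pd i Du x
    have hF2 : (∑ j, pd j (pd i (fun z => u z j)) x) = pd i Du x := by
      have hswap : ∀ j, pd j (pd i (fun z => u z j)) x = pd i (pd j (fun z => u z j)) x :=
        fun j => pd_comm (hU j) j i x
      rw [Finset.sum_congr rfl (fun j _ => hswap j)]
      rw [← pd_sum i (fun j => (contDiff_pd j (hU j)).differentiable (by simp) x)]
    -- fact 3 : Laplacian of Pu_i
    have hF3 : (∑ j, pd j (pd j (fun z => Pu z i)) x)
        = (∑ j, pd j (pd j (fun z => u z i)) x) - pd i Du x := by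
      have hsplit : ∀ j, pd j (pd j (fun z => Pu z i)) x
          = pd j (pd j (fun z => u z i)) x - pd j (pd j (pd i φ)) x := by
        intro j
        have h1 : pd j (fun z => Pu z i) = fun y => pd j (fun z => u z i) y - pd j (pd i φ) y := by
          funext y
          rw [hPfun i]
          exact pd_sub j ((hU i).differentiable (by simp) y)
            ((contDiff_pd i hφ).differentiable (by simp) y)
        rw [h1]
        exact pd_sub j ((contDiff_pd j (hU i)).differentiable (by simp) x)
          ((contDiff_pd j (contDiff_pd i hφ)).differentiable (by simp) x)
      have hφswap : ∀ j, pd j (pd j (pd i φ)) x = pd i (pd j (pd j φ)) x := by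
        intro j
        have e1 : pd j (pd i φ) = pd i (pd j φ) := by
          funext y; exact pd_comm hφ j i y
        rw [e1]
        exact pd_comm (contDiff_pd j hφ) j i x
      rw [Finset.sum_congr rfl (fun j _ => hsplit j), Finset.sum_sub_distrib]
      congr 1
      rw [Finset.sum_congr rfl (fun j _ => hφswap j)]
      rw [← pd_sum i (fun j => (contDiff_pd j (contDiff_pd j hφ)).differentiable (by simp) x)]
      rw [hlapφ]
    -- fact 4 : the ite sum
    have hF4 : (∑ j, if i = j then pd j Du x else 0) = pd i Du x := by
      simp
    rw [hsum, hF1, hF2, hF3, hF4]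
    have hL := hlap x i
    linarith

end
end
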